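/- Let G be a confusion-free swarm protocol and let σ_total be the subscription assigning to every role the set of all event types occurring in G. Then G is σ_total-well-formed; in particular, for every confusion-free swarm protocol there exists at least one subscription with respect to which it is well-formed. -/

import Mathlib

namespace SwarmSpec

/-- A swarm protocol: a pointed labelled transition system over labels in `Role × EventType`. -/
structure Protocol (Role EventType : Type) : Type 1 where
  State : Type
  init : State
  Trans : State → Role → EventType → State → Prop

/-- A machine: a pointed LTS with emitter sets, acceptance transitions and
a set of updating event types. -/
structure Machine (EventType : Type) : Type 1 where
  State : Type
  init : State
  emit : State → Set EventType
  acc : State → EventType → State → Prop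
  up : Set EventType

variable {Role EventType : Type}

/-- A subscription maps each role to a set of event types. -/
abbrev Subscription (Role EventType : Type) := Role → Set EventType

/-- `G —t→ s'` (role irrelevant). -/
def TransT (G : Protocol Role EventType) (s : G.State) (t : EventType) (s' : G.State) : Prop :=
  ∃ R, G.Trans s R t s'

/-- Reachability between protocol states. -/
def ReachFrom (G : Protocol Role EventType) : G.State → G.State → Prop :=
  Relation.ReflTransGen (fun s s' => ∃ t, TransT G s t s')

/-- A subterm of `G` is a state reachable from the initial state. -/
def Subterm (G : Protocol Role EventType) (s : G.State) : Prop :=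
  ReachFrom G G.init s

/-- `R⟨t⟩ ∈ G`: the label occurs on a transition between subterms of `G`. -/
def LabelIn (G : Protocol Role EventType) (R : Role) (t : EventType) : Prop :=
  ∃ s s', Subterm G s ∧ G.Trans s R t s'

/-- `t ∈ G`. -/
def ETypeIn (G : Protocol Role EventType) (t : EventType) : Prop :=
  ∃ R, LabelIn G R t

/-- `R ∈ G`. -/
def RoleIn (G : Protocol Role EventType) (R : Role) : Prop :=
  ∃ t, LabelIn G R t

/-- `t` occurs in the subprotocol rooted at state `s`. -/
def ETypeFrom (G : Protocol Role EventType) (s : G.State) (t : EventType) : Prop :=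
  ∃ s' s'', ReachFrom G s s' ∧ TransT G s' t s''

/-- `G —l→ G'` for a sequence `l` of event types. -/
def TransSeq (G : Protocol Role EventType) : G.State → List EventType → G.State → Prop
  | s, [], s' => s = s'
  | s, t :: l, s'' => ∃ s', TransT G s t s' ∧ TransSeq G s' l s''

/-- Two protocols are interfacing when common event types are emitted by common roles only. -/
def Interfacing (G G' : Protocol Role EventType) : Prop :=
  ∀ R R' t, LabelIn G R t → LabelIn G' R' t → R = R'

/-- Composition of protocols with respect to a set `ℛ` of roles. -/
def comp (ℛ : Set Role) (G G' : Protocol Role EventType) : Protocol Role EventType where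
  State := G.State × G'.State
  init := (G.init, G'.init)
  Trans := fun p R t q =>
    (G.Trans p.1 R t q.1 ∧ q.2 = p.2 ∧ R ∉ ℛ) ∨
    (G'.Trans p.2 R t q.2 ∧ q.1 = p.1 ∧ R ∉ ℛ) ∨
    (G.Trans p.1 R t q.1 ∧ G'.Trans p.2 R t q.2)

/-- Interfacing roles of two protocols: the roles occurring in both. -/
def ifRoles (G G' : Protocol Role EventType) : Set Role :=
  {R | RoleIn G R ∧ RoleIn G' R}

/-- `G ∥ G'`: composition over the interfacing roles. -/
def compI (G G' : Protocol Role EventType) : Protocol Role EventType :=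
  comp (ifRoles G G') G G'

/-- `G1 ∥ ⋯ ∥ Gn`, read left-associatively. -/
def compAll : List (Protocol Role EventType) → Protocol Role EventType
  | [] => ⟨PUnit, PUnit.unit, fun _ _ _ _ => False⟩
  | G :: rest => rest.foldl compI G

/-- `Rel` is a bisimulation between `G` and `G'` relating the initial states. -/
def IsBisimulation (G G' : Protocol Role EventType)
    (Rel : G.State → G'.State → Prop) : Prop :=
  Rel G.init G'.init ∧
  (∀ s s', Rel s s' → ∀ R t u, G.Trans s R t u → ∃ u', G'.Trans s' R t u' ∧ Rel u u') ∧
  (∀ s s', Rel s s' → ∀ R t u', G'.Trans s' R t u' → ∃ u, G.Trans s R t u ∧ Rel u u')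

/-- Protocol bisimilarity. -/
def Bisimilar (G G' : Protocol Role EventType) : Prop :=
  ∃ Rel, IsBisimulation G G' Rel

/-- Distinct event types `t, t'` are concurrent in `G`. -/
def Concurrent (G : Protocol Role EventType) (t t' : EventType) : Prop :=
  t ≠ t' ∧ ∃ s₁ s₂ : G.State, Subterm G s₁ ∧
    (∃ m, TransT G s₁ t m ∧ TransT G m t' s₂) ∧
    (∃ m, TransT G s₁ t' m ∧ TransT G m t s₂)

/-- A protocol is sequential if no two of its event types are concurrent. -/
def Sequential (G : Protocol Role EventType) : Prop :=
  ∀ t t', ¬ Concurrent G t t'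

/-- Confusion-freeness of a protocol. -/
def ConfusionFree (G : Protocol Role EventType) : Prop :=
  (∀ (t : EventType) (R R' : Role), LabelIn G R t → LabelIn G R' t → R = R') ∧
  (∀ (s₁ s₂ s₃ : G.State) (t : EventType),
     Subterm G s₁ → TransT G s₁ t s₂ → TransT G s₁ t s₃ → s₂ = s₃) ∧
  (∃ Gs : List (Protocol Role EventType), Gs ≠ [] ∧ Bisimilar G (compAll Gs) ∧
     ∀ Gi ∈ Gs, ∀ (t : EventType) (s s' : Gi.State),
       Subterm Gi s → Subterm Gi s' →
       (∃ u, TransT Gi s t u) → (∃ u, TransT Gi s' t u) → s = s')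

/-- A finite family of protocols is composable if they are pairwise interfacing
and each is sequential and confusion-free. -/
def Composable (L : List (Protocol Role EventType)) : Prop :=
  (∀ i j : Fin L.length, i ≠ j → Interfacing (L.get i) (L.get j)) ∧
  (∀ G ∈ L, Sequential G ∧ ConfusionFree G)

/-- `t` is branching with `t'` at subterm `s`. -/
def Branching (G : Protocol Role EventType) (t t' : EventType) (s : G.State) : Prop :=
  t ≠ t' ∧ Subterm G s ∧ ¬ Concurrent G t t' ∧
  ∃ s₂ s₃ : G.State, s₂ ≠ s₃ ∧ TransT G s t s₂ ∧ TransT G s t' s₃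

/-- `t` is joining for `t'` and `t''` at `s₃`. -/
def Joining (G : Protocol Role EventType) (t t' t'' : EventType) (s₃ : G.State) : Prop :=
  ∃ s₁ s₂ : G.State, Subterm G s₁ ∧ Subterm G s₂ ∧
    TransT G s₁ t' s₃ ∧ TransT G s₂ t'' s₃ ∧ (∃ u, TransT G s₃ t u) ∧
    Concurrent G t' t'' ∧ ¬ Concurrent G t' t ∧ ¬ Concurrent G t'' t

/-- `t` is looping. -/
def LoopingT (G : Protocol Role EventType) (t : EventType) : Prop :=
  ∃ (s : G.State) (l : List EventType) (m : G.State),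
    Subterm G s ∧ TransSeq G s l m ∧ TransT G m t s

/-- From `s` there is a path `—t₀→—l₁→—t₁→ ⋯ —lₙ→—tₙ→` whose distinguished
event types are the given list. -/
def ChainFrom (G : Protocol Role EventType) : G.State → List EventType → Prop
  | _, [] => True
  | s, t :: rest => ∃ s' : G.State, TransT G s t s' ∧
      ∃ (l : List EventType) (s'' : G.State), TransSeq G s' l s'' ∧ ChainFrom G s'' rest

/-- `roles_σ(t, s)`. -/
def rolesOf (G : Protocol Role EventType) (σ : Subscription Role EventType)
    (t : EventType) (s : G.State) : Set Role :=
  {R | ∃ ts : List EventType, ChainFrom G s (t :: ts) ∧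
       List.Chain' (fun a b => ¬ Concurrent G a b) (t :: ts) ∧
       (t :: ts).getLast (List.cons_ne_nil t ts) ∈ σ R}

/-- Causal consistency of `G` for `σ`. -/
def CausalConsistent (G : Protocol Role EventType) (σ : Subscription Role EventType) : Prop :=
  ∀ (t' t : EventType) (R : Role), ETypeIn G t' → LabelIn G R t →
    t ∈ σ R ∧
    ((¬ Concurrent G t' t ∧
       ∃ (s₁ m : G.State), Subterm G s₁ ∧ TransT G s₁ t' m ∧ ∃ s₂, G.Trans m R t s₂) →
      t' ∈ σ R)

/-- Determinacy of `G` for `σ`. -/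
def Determinate (G : Protocol Role EventType) (σ : Subscription Role EventType) : Prop :=
  (∀ (s : G.State) (t t' : EventType) (R : Role), ETypeIn G t → RoleIn G R →
     Branching G t t' s → R ∈ rolesOf G σ t s → t ∈ σ R ∧ t' ∈ σ R) ∧
  (∀ (s : G.State) (t t' t'' : EventType) (R : Role), ETypeIn G t → RoleIn G R →
     Subterm G s → Joining G t t' t'' s → R ∈ rolesOf G σ t s →
       t ∈ σ R ∧ t' ∈ σ R ∧ t'' ∈ σ R) ∧
  (∀ (s : G.State) (l : List EventType), Subterm G s → l ≠ [] → TransSeq G s l s →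
     ∃ t' ∈ l, ∃ s'' : G.State, ReachFrom G s s'' ∧ (∃ u, TransT G s'' t' u) ∧
       ∀ R : Role, R ∈ rolesOf G σ t' s'' → t' ∈ σ R)

/-- `G` is `σ`-well-formed. -/
def WellFormed (G : Protocol Role EventType) (σ : Subscription Role EventType) : Prop :=
  ConfusionFree G ∧ CausalConsistent G σ ∧ Determinate G σ

/-- `t` is looping in `σ` (it witnesses the Looping clause of determinacy). -/
def LoopingInSub (G : Protocol Role EventType) (σ : Subscription Role EventType)
    (t : EventType) : Prop :=
  ∃ (s : G.State) (l : List EventType), Subterm G s ∧ l ≠ [] ∧ TransSeq G s l s ∧ t ∈ l ∧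
    ∃ s'' : G.State, ReachFrom G s s'' ∧ (∃ u, TransT G s'' t u) ∧
      ∀ R, R ∈ rolesOf G σ t s'' → t ∈ σ R

/-! ### Algorithm 1 -/

/-- `subscribers_σ(s)`: roles subscribing to some event type occurring at state `s`. -/
def subscribers (G : Protocol Role EventType) (σ : Subscription Role EventType)
    (s : G.State) : Set Role :=
  {R | ∃ t, ETypeFrom G s t ∧ t ∈ σ R}

/-- The interfacing roles `ifr` of a family of protocols. -/
def ifr (L : List (Protocol Role EventType)) : Set Role :=
  {R | ∃ i j : Fin L.length, i ≠ j ∧ RoleIn (L.get i) R ∧ RoleIn (L.get j) R}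

def concHalf (L : List (Protocol Role EventType)) (t t' : EventType) : Prop :=
  ∃ (i j : Fin L.length) (R R' : Role), i ≠ j ∧
    LabelIn (L.get i) R t ∧ LabelIn (L.get j) R' t' ∧
    ¬ RoleIn (L.get j) R ∧ ¬ RoleIn (L.get i) R'

/-- `{t, t'} ∈ conc`. -/
def InConc (L : List (Protocol Role EventType)) (t t' : EventType) : Prop :=
  concHalf L t t' ∨ concHalf L t' t

/-- `σ` contains `σ0` and is closed under the monotone rules of Algorithm 1. -/
def Closed (L : List (Protocol Role EventType))
    (σ0 σ : Subscription Role EventType) : Prop :=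
  (∀ R, σ0 R ⊆ σ R) ∧
  -- Causal Consistency (emission)
  (∀ (i : Fin L.length) (s : (L.get i).State) (R : Role) (t : EventType),
     Subterm (L.get i) s → (∃ s', (L.get i).Trans s R t s') → t ∈ σ R) ∧
  -- Causal Consistency (predecessor)
  (∀ (i : Fin L.length) (s : (L.get i).State) (t' t : EventType) (R : Role),
     Subterm (L.get i) s →
     (∃ m, TransT (L.get i) s t' m ∧ ∃ s', (L.get i).Trans m R t s') → t' ∈ σ R) ∧
  -- Branching
  (∀ (i : Fin L.length) (s : (L.get i).State) (t t' : EventType) (R : Role),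
     Branching (L.get i) t t' s → R ∈ subscribers (L.get i) σ s → t ∈ σ R ∧ t' ∈ σ R) ∧
  -- Joining
  (∀ (i j : Fin L.length) (si : (L.get i).State) (sj : (L.get j).State)
      (t t' t'' : EventType) (R : Role),
     Subterm (L.get i) si → Subterm (L.get j) sj →
     (∃ m, TransT (L.get i) si t' m ∧ ∃ u, TransT (L.get i) m t u) →
     (∃ m, TransT (L.get j) sj t'' m ∧ ∃ u, TransT (L.get j) m t u) →
     InConc L t' t'' → ¬ InConc L t' t → ¬ InConc L t'' t →
     R ∈ subscribers (L.get i) σ si →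
     t' ∈ σ R ∧ t'' ∈ σ R ∧ t ∈ σ R) ∧
  -- Interfacing
  (∀ (i : Fin L.length) (s s' : (L.get i).State) (R R' : Role) (t : EventType),
     Subterm (L.get i) s → (L.get i).Trans s R t s' → R ∈ ifr L →
     R' ∈ subscribers (L.get i) σ s' → t ∈ σ R')

/-- The least fixed point of the monotone rules of Algorithm 1 above `σ0`. -/
def algFix (L : List (Protocol Role EventType)) (σ0 : Subscription Role EventType) :
    Subscription Role EventType :=
  fun R => {t | ∀ σ', Closed L σ0 σ' → t ∈ σ' R}

/-- State `s` has an event type looping in `σ`. -/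
def HasLoopingAt (G : Protocol Role EventType) (σ : Subscription Role EventType)
    (s : G.State) : Prop :=
  ∃ l : List EventType, l ≠ [] ∧ TransSeq G s l s ∧
    ∃ t' ∈ l, ∃ s'' : G.State, ReachFrom G s s'' ∧ (∃ u, TransT G s'' t' u) ∧
      ∀ R, R ∈ rolesOf G σ t' s'' → t' ∈ σ R

/-- The subscription computed by Algorithm 1 (fixed point followed by the looping phase). -/
def algOutput (L : List (Protocol Role EventType)) (σ0 : Subscription Role EventType) :
    Subscription Role EventType :=
  fun R => algFix L σ0 R ∪
    {t | ∃ (i : Fin L.length) (s : (L.get i).State) (l : List EventType),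
      Subterm (L.get i) s ∧ TransSeq (L.get i) s (t :: l) s ∧
      R ∈ subscribers (L.get i) (algFix L σ0) s ∧
      ¬ HasLoopingAt (L.get i) (algFix L σ0) s}

/-- Pointwise union of a family of subscriptions. -/
def unionSubs {n : ℕ} (σs : Fin n → Subscription Role EventType) :
    Subscription Role EventType :=
  fun R => ⋃ i, σs i R

/-! ### Components of states of a composition -/

def foldState : (A : Protocol Role EventType) → (L : List (Protocol Role EventType)) →
    A.State → ((i : Fin L.length) → (L.get i).State) → (L.foldl compI A).State
  | _, [], a, _ => a
  | A, G :: rest, a, f =>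
      foldState (compI A G) rest (a, f ⟨0, Nat.succ_pos _⟩) (fun i => f i.succ)

/-- Build the state `G'_1 ∥ ⋯ ∥ G'_n` of `compAll L` from component states. -/
def buildState : (L : List (Protocol Role EventType)) →
    ((i : Fin L.length) → (L.get i).State) → (compAll L).State
  | [], _ => PUnit.unit
  | G :: rest, f => foldState G rest (f ⟨0, Nat.succ_pos _⟩) (fun i => f i.succ)

end SwarmSpec
namespace SwarmSpec

variable {Role EventType : Type}

/-! ### Machines, projections, machine composition -/

/-- `l` contains no event type subscribed by `R`. -/
def NoSub (σ : Subscription Role EventType) (R : Role) (l : List EventType) : Prop :=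
  ∀ t ∈ l, t ∉ σ R

/-- `M` is a projection of (the state `g0` of) `G` onto role `R` for `σ`
(coinductive characterisation via a relation). -/
def IsProjectionAt (G : Protocol Role EventType) (σ : Subscription Role EventType)
    (R : Role) (g0 : G.State) (M : Machine EventType) : Prop :=
  ∃ Rel : M.State → G.State → Prop,
    Rel M.init g0 ∧
    ∀ m g, Rel m g →
      (M.emit m = {t | ∃ (l : List EventType) (g1 g2 : G.State),
          TransSeq G g l g1 ∧ NoSub σ R l ∧ G.Trans g1 R t g2}) ∧
      (∀ t m', M.acc m t m' → t ∈ σ R ∧ ∃ (l : List EventType) (g1 g2 : G.State),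
          TransSeq G g l g1 ∧ NoSub σ R l ∧ TransT G g1 t g2 ∧ Rel m' g2) ∧
      (∀ (t : EventType) (l : List EventType) (g1 g2 : G.State),
          t ∈ σ R → TransSeq G g l g1 → NoSub σ R l → TransT G g1 t g2 →
          ∃ m', M.acc m t m' ∧ Rel m' g2)

/-- Machine bisimulation. -/
def MIsBisim (M N : Machine EventType) (Rel : M.State → N.State → Prop) : Prop :=
  Rel M.init N.init ∧
  ∀ m n, Rel m n →
    M.emit m = N.emit n ∧
    (∀ t m', M.acc m t m' → ∃ n', N.acc n t n' ∧ Rel m' n') ∧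
    (∀ t n', N.acc n t n' → ∃ m', M.acc m t m' ∧ Rel m' n')

/-- Machine bisimilarity. -/
def MBisimilar (M N : Machine EventType) : Prop := ∃ Rel, MIsBisim M N Rel

def MReach (M : Machine EventType) : M.State → M.State → Prop :=
  Relation.ReflTransGen (fun m m' => ∃ t, M.acc m t m')

/-- `t` occurs (in an emitter set or on an acceptance transition) in machine `M`. -/
def MOcc (M : Machine EventType) (t : EventType) : Prop :=
  ∃ m : M.State, MReach M M.init m ∧ (t ∈ M.emit m ∨ ∃ m', M.acc m t m')

/-- Acceptance transitions of the machine composition `M ∥ N`. -/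
def mcompAcc (M N : Machine EventType) :
    M.State × N.State → EventType → M.State × N.State → Prop :=
  fun p t q =>
    ((MOcc M t ∧ MOcc N t) ∧ M.acc p.1 t q.1 ∧ N.acc p.2 t q.2) ∨
    (¬ (MOcc M t ∧ MOcc N t) ∧ M.acc p.1 t q.1 ∧ q.2 = p.2) ∨
    (¬ (MOcc M t ∧ MOcc N t) ∧ N.acc p.2 t q.2 ∧ q.1 = p.1)

/-- Machine composition `M ∥ N`. -/
def mcompI (M N : Machine EventType) : Machine EventType where
  State := M.State × N.State
  init := (M.init, N.init)
  emit := fun p => (M.emit p.1 ∪ N.emit p.2) ∩ {t | ∃ q, mcompAcc M N p t q}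
  acc := mcompAcc M N
  up := M.up ∪ N.up

/-- `M1 ∥ ⋯ ∥ Mn`, read left-associatively. -/
def mcompAll : List (Machine EventType) → Machine EventType
  | [] => ⟨PUnit, PUnit.unit, fun _ => ∅, fun _ _ _ => False, ∅⟩
  | M :: rest => rest.foldl mcompI M

/-- The canonical projection machine `G↓σR` (with updating set `U`). -/
def projMachine (G : Protocol Role EventType) (σ : Subscription Role EventType)
    (R : Role) (U : Set EventType) : Machine EventType where
  State := G.State
  init := G.init
  emit := fun g => {t | ∃ (l : List EventType) (g1 g2 : G.State),
      TransSeq G g l g1 ∧ NoSub σ R l ∧ G.Trans g1 R t g2}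
  acc := fun g t g' => t ∈ σ R ∧ ∃ (l : List EventType) (g1 : G.State),
      TransSeq G g l g1 ∧ NoSub σ R l ∧ TransT G g1 t g'
  up := U

/-- Event types selected as updating by Algorithm 1: branching at a subterm of
some `Gi`, or satisfying the premises of the Joining rule, or looping in `σ`. -/
def algUpdating (L : List (Protocol Role EventType)) (σ : Subscription Role EventType)
    (t : EventType) : Prop :=
  (∃ (i : Fin L.length) (t' : EventType) (s : (L.get i).State), Branching (L.get i) t t' s) ∨
  (∃ (i j : Fin L.length) (t' t'' : EventType) (si : (L.get i).State) (sj : (L.get j).State),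
     Subterm (L.get i) si ∧ Subterm (L.get j) sj ∧
     (∃ m, TransT (L.get i) si t' m ∧ ∃ u, TransT (L.get i) m t u) ∧
     (∃ m, TransT (L.get j) sj t'' m ∧ ∃ u, TransT (L.get j) m t u) ∧
     InConc L t' t'' ∧ ¬ InConc L t' t ∧ ¬ InConc L t'' t) ∨
  (∃ i : Fin L.length, LoopingInSub (L.get i) σ t)

/-- Replace the updating set of a machine. -/
def setUp (M : Machine EventType) (U : Set EventType) : Machine EventType :=
  { M with up := U }

/-- Machine adaptation `A(M, (G1,…,Gn), R, k, σ)`. -/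
def adapt (M : Machine EventType) (L : List (Protocol Role EventType))
    (k : Fin L.length) (R : Role) (σ : Subscription Role EventType) : Machine EventType :=
  setUp (mcompAll (List.ofFn (fun i : Fin L.length =>
    if i = k then mcompI M (projMachine (L.get i) σ R ∅)
    else projMachine (L.get i) σ R ∅)))
    {t | algUpdating L σ t}

/-! ### Events, logs, branch-tracking semantics, swarms -/

/-- A type of events, each with an event type and an optional pointer. -/
structure ES (EventType : Type) : Type 1 where
  Event : Type
  deceq : DecidableEq Event
  etype : Event → EventType
  pvs : Event → Option Event

/-- Acceptance paths of a machine. -/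
def AccSeq (M : Machine EventType) : M.State → List EventType → M.State → Prop
  | m, [], m' => m = m'
  | m, t :: l, m'' => ∃ m', M.acc m t m' ∧ AccSeq M m' l m''

/-- `branch(M, t)` at machine state `m` (concurrency taken in protocol `G`). -/
def branchM (G : Protocol Role EventType) (M : Machine EventType)
    (m : M.State) (t : EventType) : Set EventType :=
  {tk | ∃ pre : List EventType, (∃ m', AccSeq M m (t :: (pre ++ [tk])) m') ∧
    (∀ t' ∈ pre, t' ∉ M.up) ∧ (∀ t' ∈ pre, ¬ Concurrent G t' t) ∧ ¬ Concurrent G tk t}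

/-- Branch-tracking step of a machine on an event. -/
def MStep (E : ES EventType) (G : Protocol Role EventType) (M : Machine EventType) :
    M.State × (EventType → Option E.Event) → E.Event →
    M.State × (EventType → Option E.Event) → Prop :=
  fun p e q =>
    M.acc p.1 (E.etype e) q.1 ∧ E.pvs e = p.2 (E.etype e) ∧
    ((E.etype e ∉ M.up ∧ q.2 = p.2) ∨
     (E.etype e ∈ M.up ∧
       ∀ t'', (t'' ∈ branchM G M p.1 (E.etype e) → q.2 t'' = some e) ∧
              (t'' ∉ branchM G M p.1 (E.etype e) → q.2 t'' = p.2 t'')))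

/-- `t` is updating for protocol `G` and subscription `σ`:
branching, joining, or looping in `σ`. -/
def Updating (G : Protocol Role EventType) (σ : Subscription Role EventType)
    (t : EventType) : Prop :=
  (∃ (t' : EventType) (s : G.State), Branching G t t' s) ∨
  (∃ (t' t'' : EventType) (s : G.State), Subterm G s ∧ Joining G t t' t'' s) ∨
  LoopingInSub G σ t

/-- `branch_G(t)` at protocol state `g`. -/
def branchG (G : Protocol Role EventType) (σ : Subscription Role EventType)
    (g : G.State) (t : EventType) : Set EventType :=
  {tk | ∃ pre : List EventType, (∃ g', TransSeq G g (t :: (pre ++ [tk])) g') ∧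
    (∀ t' ∈ pre, ¬ Updating G σ t') ∧ (∀ t' ∈ pre, ¬ Concurrent G t' t) ∧ ¬ Concurrent G tk t}

/-- Branch-tracking step of a protocol state on an event. -/
def GStep (E : ES EventType) (G : Protocol Role EventType)
    (σ : Subscription Role EventType) :
    G.State × (EventType → Option E.Event) → E.Event →
    G.State × (EventType → Option E.Event) → Prop :=
  fun p e q =>
    TransT G p.1 (E.etype e) q.1 ∧ E.pvs e = p.2 (E.etype e) ∧
    ((¬ Updating G σ (E.etype e) ∧ q.2 = p.2) ∨
     (Updating G σ (E.etype e) ∧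
       ∀ t'', (t'' ∈ branchG G σ p.1 (E.etype e) → q.2 t'' = some e) ∧
              (t'' ∉ branchG G σ p.1 (E.etype e) → q.2 t'' = p.2 t'')))

/-- Log processing: `Proc step p λ out r` scans the log `λ` from `p`, keeping
the events in `out` (the effective log) and ending in `r`. -/
inductive Proc {S Event : Type}
    (step : S × (EventType → Option Event) → Event → S × (EventType → Option Event) → Prop) :
    S × (EventType → Option Event) → List Event → List Event →
    S × (EventType → Option Event) → Prop
  | nil (p : S × (EventType → Option Event)) : Proc step p [] [] p
  | keep {p q r : S × (EventType → Option Event)} {e : Event} {l out : List Event} :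
      step p e q → Proc step q l out r → Proc step p (e :: l) (e :: out) r
  | skip {p r : S × (EventType → Option Event)} {e : Event} {l out : List Event} :
      (¬ ∃ q, step p e q) → Proc step p l out r → Proc step p (e :: l) out r

/-- `(M, λi) ⇒t! (M, λi·e)`: machine `M` with local log `λi` may emit event `e`. -/
def Emits (E : ES EventType) (G : Protocol Role EventType) (M : Machine EventType)
    (lo : List E.Event) (e : E.Event) : Prop :=
  ∃ (m : M.State) (lu : EventType → Option E.Event) (out : List E.Event),
    Proc (MStep E G M) (M.init, fun _ => none) lo out (m, lu) ∧
    E.etype e ∈ M.emit m ∧ E.pvs e = lu (E.etype e)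

/-- Swarm transition relation (Local emission and Prop(agation)). -/
def SwarmStep (E : ES EventType) (G : Protocol Role EventType)
    {ι : Type} [DecidableEq ι] (Ms : ι → Machine EventType) :
    (ι → List E.Event) × List E.Event → (ι → List E.Event) × List E.Event → Prop :=
  fun c c' =>
    (∃ (i : ι) (e : E.Event) (la lb : List E.Event),
       c.2 = la ++ lb ∧ List.Sublist (c.1 i) la ∧ e ∉ c.2 ∧
       Emits E G (Ms i) (c.1 i) e ∧
       c'.1 = Function.update c.1 i (c.1 i ++ [e]) ∧ c'.2 = la ++ e :: lb) ∨
    (∃ (i : ι) (l' : List E.Event),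
       List.Sublist (c.1 i) l' ∧ c.1 i ≠ l' ∧ List.Sublist l' c.2 ∧
       c'.1 = Function.update c.1 i l' ∧ c'.2 = c.2)

open Classical in
/-- `λ↓T`: restriction of a log to the event types in `T`. -/
noncomputable def restrictLog (E : ES EventType) (T : Set EventType) :
    List E.Event → List E.Event
  | [] => []
  | e :: l => if E.etype e ∈ T then e :: restrictLog E T l else restrictLog E T l

/-- A swarm (indexed by `ι`) realises protocol `G` with respect to `σ`. -/
def Realises (G : Protocol Role EventType) (σ : Subscription Role EventType)
    {ι : Type} (Ms : ι → Machine EventType) (ρ : ι → Role) : Prop :=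
  ∀ i, RoleIn G (ρ i) ∧ IsProjectionAt G σ (ρ i) G.init (Ms i) ∧
    (Ms i).up = {t | Updating G σ t}

/-- Eventual fidelity of a swarm to a protocol `G` with respect to `σ`. -/
def EventuallyFaithful (E : ES EventType) (G : Protocol Role EventType)
    (σ : Subscription Role EventType) {ι : Type} [DecidableEq ι]
    (Ms : ι → Machine EventType) (ρ : ι → Role) : Prop :=
  ∀ (logs : ι → List E.Event) (gl : List E.Event),
    Relation.ReflTransGen (SwarmStep E G Ms) (fun _ => [], []) (logs, gl) →
    ∀ (i : ι) (outG outM : List E.Event)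
      (pG : G.State × (EventType → Option E.Event))
      (pM : (Ms i).State × (EventType → Option E.Event)),
      Proc (GStep E G σ) (G.init, fun _ => none) gl outG pG →
      Proc (MStep E G (Ms i)) ((Ms i).init, fun _ => none) gl outM pM →
      restrictLog E (σ (ρ i)) outG = outM

end SwarmSpec
namespace SwarmSpec

/-- Every confusion-free swarm protocol is well-formed with
respect to the total subscription assigning to every role the set of all
event types occurring in the protocol; in particular, for every confusion-free
protocol there exists at least one subscription with respect to which it is
well-formed. -/
theorem total_subscription_well_formed {Role EventType : Type}
    [DecidableEq Role] [DecidableEq EventType]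
    (G : Protocol Role EventType) (hcf : ConfusionFree G) :
    WellFormed G (fun _ => {t | ETypeIn G t}) ∧
    ∃ σ : Subscription Role EventType, WellFormed G σ := by
  have key : WellFormed G (fun _ => {t | ETypeIn G t}) := by
    have etin : ∀ (s s' : G.State) (t : EventType), Subterm G s → TransT G s t s' →
        ETypeIn G t := by
      rintro s s' t hs ⟨R, hR⟩
      exact ⟨R, s, s', hs, hR⟩
    refine ⟨hcf, ?_, ?_, ?_, ?_⟩
    · -- causal consistency
      rintro t' t R ht' ⟨s, s', hs, hR⟩
      exact ⟨⟨R, s, s', hs, hR⟩, fun _ => ht'⟩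
    · -- branching
      rintro s t t' R ht hR ⟨hne, hs, hnc, s₂, s₃, hne23, h2, h3⟩ hroles
      exact ⟨ht, etin s s₃ t' hs h3⟩
    · -- joining
      rintro s t t' t'' R ht hR hs ⟨s₁, s₂, hs₁, hs₂, h1, h2, ⟨u, hu⟩, _⟩ hroles
      exact ⟨ht, etin s₁ s t' hs₁ h1, etin s₂ s t'' hs₂ h2⟩
    · -- looping
      rintro s l hs hl hseq
      match l, hseq with
      | t :: rest, ⟨m, hm, hrest⟩ =>
        refine ⟨t, (List.mem_cons_self : t ∈ t :: rest), s, Relation.ReflTransGen.refl,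
          ⟨m, hm⟩, fun R _ => etin s m t hs hm⟩
  exact ⟨key, ⟨_, key⟩⟩


end SwarmSpec
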